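/- arXiv:2008.01075 — 8 statements merged into one kernel-verified Lean document; each statement's English description precedes it below -/
import Mathlib

section
/- Let l be a list of natural numbers whose nim-sum (the XOR of all its entries) is 0. Then for every index m < l.length and every natural number y with y ≠ l.get m, the list obtained from l by replacing the entry at index m with y has nonzero nim-sum. (In the game of Nim: if after a player's turn the nim-sum equals 0, any move by the next player changes it to a nonzero value.) -/
theorem List.foldr_xor_set (l : List ℕ) {m : ℕ} (hm : m < l.length) (y : ℕ) :
    (l.set m y).foldr (· ^^^ ·) 0 = l.foldr (· ^^^ ·) 0 ^^^ l[m] ^^^ y := by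
  induction l generalizing m with
  | nil => simp at hm
  | cons a t ih =>
    cases m with
    | zero =>
      simp only [List.set_cons_zero, List.foldr_cons, List.getElem_cons_zero]
      rw [Nat.xor_comm a, Nat.xor_xor_cancel_right, Nat.xor_comm]
    | succ m =>
      simp only [List.set_cons_succ, List.foldr_cons, List.getElem_cons_succ,
        ih (Nat.lt_of_succ_lt_succ hm), Nat.xor_assoc]

theorem nim_zero_sum_must_change (l : List ℕ)
    (h : l.foldr (· ^^^ ·) 0 = 0) :
    ∀ (m : ℕ) (hm : m < l.length) (y : ℕ), y ≠ l.get ⟨m, hm⟩ →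
      (l.set m y).foldr (· ^^^ ·) 0 ≠ 0 := by
  intro m hm y hy
  rw [List.foldr_xor_set l hm y, h, Nat.zero_xor, Ne, Nat.xor_eq_zero_iff]
  exact hy.symm
end

section
/- Let l be a list of natural numbers whose nim-sum (the XOR of all its entries) is nonzero. Then there exists an index m < l.length and a natural number y < l.get m such that the list obtained from l by replacing the entry at index m with y has nim-sum 0. (In the game of Nim: if after a player's turn the nim-sum is nonzero, the next player can always make it 0 by removing objects from a single pile.) -/
/-- The nim-sum of Nim heaps has every smaller value as an option, as in the Sprague–Grundy
theorem. -/
theorem List.exists_set_lt_foldr_xor_eq (l : List ℕ) {a : ℕ} (h : a < l.foldr (· ^^^ ·) 0) :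
    ∃ (m : ℕ) (hm : m < l.length) (y : ℕ), y < l.get ⟨m, hm⟩ ∧
      (l.set m y).foldr (· ^^^ ·) 0 = a := by
  induction l generalizing a with
  | nil => simp at h
  | cons x t ih =>
    rcases Nat.lt_xor_cases h with lower_head | lower_tail
    · exact ⟨0, by simp, _, lower_head, by simp⟩
    · obtain ⟨m, hm, y, hy, hset⟩ := ih lower_tail
      exact ⟨m + 1, by simpa using hm, y, hy, by simp [hset]⟩

theorem nim_nonzero_sum_can_zero (l : List ℕ)
    (h : l.foldr (· ^^^ ·) 0 ≠ 0) :
    ∃ (m : ℕ) (hm : m < l.length) (y : ℕ), y < l.get ⟨m, hm⟩ ∧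
      (l.set m y).foldr (· ^^^ ·) 0 = 0 :=
  l.exists_set_lt_foldr_xor_eq (Nat.pos_of_ne_zero h)
end

section
/- Let l be a list of natural numbers, regarded as the piles of a game of Nim, and consider the combinatorial (pre)game given by the disjunctive sum of the single-pile nim games nim(n) for n in l. This game sum is equivalent to the zero game (i.e., the first player to go loses under normal play) if and only if the nim-sum (XOR) of the entries of l equals 0. -/
universe u

namespace SetTheory

/-- Pre-game, as in Mathlib's former `SetTheory.PGame` (removed from Mathlib). -/
inductive PGame : Type (u + 1)
  | mk : ∀ α β : Type u, (α → PGame) → (β → PGame) → PGame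

namespace PGame

/-- The zero pre-game `{ | }`. -/
instance : Zero PGame.{u} :=
  ⟨⟨PEmpty, PEmpty, PEmpty.elim, PEmpty.elim⟩⟩

/-- The pair `(x ≤ y, x ⧏ y)`, where `x ≤ y ↔ (∀ i, xL i ⧏ y) ∧ (∀ j, x ⧏ yR j)` and
`x ⧏ y ↔ (∃ i, x ≤ yL i) ∨ (∃ j, xR j ≤ y)`. -/
noncomputable def leLf (x : PGame.{u}) : PGame.{u} → Prop × Prop :=
  PGame.rec (motive := fun _ => PGame.{u} → Prop × Prop)
    (fun xl xr xL xR IHxl IHxr => fun y =>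
      PGame.rec (motive := fun _ => Prop × Prop)
        (fun yl yr yL yR IHyl IHyr =>
          ((∀ i, (IHxl i (mk yl yr yL yR)).2) ∧ (∀ j, (IHyr j).2),
           (∃ i, (IHyl i).1) ∨ (∃ j, (IHxr j (mk yl yr yL yR)).1))) y) x

instance : LE PGame.{u} :=
  ⟨fun x y => (leLf x y).1⟩

/-- Equivalence of pre-games: `x ≤ y ∧ y ≤ x`. -/
def Equiv (x y : PGame.{u}) : Prop :=
  x ≤ y ∧ y ≤ x

instance : HasEquiv PGame.{u} :=
  ⟨Equiv⟩

/-- The disjunctive sum of pre-games. -/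
noncomputable def add (x : PGame.{u}) : PGame.{u} → PGame.{u} :=
  PGame.rec (motive := fun _ => PGame.{u} → PGame.{u})
    (fun xl xr _ _ IHxl IHxr => fun y =>
      PGame.rec (motive := fun _ => PGame.{u})
        (fun yl yr yL yR IHyl IHyr =>
          mk (xl ⊕ yl) (xr ⊕ yr)
            (Sum.rec (fun i => IHxl i (mk yl yr yL yR)) IHyl)
            (Sum.rec (fun i => IHxr i (mk yl yr yL yR)) IHyr)) y) x

noncomputable instance : Add PGame.{u} :=
  ⟨add⟩

/-- The pre-game `nim o`, where a move is to any strictly smaller ordinal. -/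
noncomputable def nim (o : Ordinal.{u}) : PGame.{u} :=
  mk o.ToType o.ToType
    (fun x => nim (Ordinal.typein (α := o.ToType) (· < ·) x))
    (fun x => nim (Ordinal.typein (α := o.ToType) (· < ·) x))
termination_by o
decreasing_by all_goals exact Ordinal.typein_lt_self x

end PGame

end SetTheory

/-!
Nim positions are lists of piles, and the game of a position is impartial: for both players its
options are the games of the positions reached by lowering one pile. For an impartial game indexed
by a well-founded move relation, `G a ≈ 0` holds exactly on any set `P` of positions such that a
position lies in `P` iff no move leads into `P`; well-founded induction proves `G a ≤ 0` and
`0 ≤ G a` on `P`, and `G a ⧏ 0` and `0 ⧏ G a` off `P`. The positions of nim-sum `0` form such a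
set: lowering one pile changes the nim-sum, and if the nim-sum `s` is nonzero then some pile `n`
satisfies `n ^^^ s < n`, and lowering it to `n ^^^ s` gives nim-sum `0`.
-/

namespace SetTheory.PGame

def LeftMoves : PGame.{u} → Type u
  | mk l _ _ _ => l

def RightMoves : PGame.{u} → Type u
  | mk _ r _ _ => r

def moveLeft : (g : PGame.{u}) → LeftMoves g → PGame.{u}
  | mk _ _ L _ => L

def moveRight : (g : PGame.{u}) → RightMoves g → PGame.{u}
  | mk _ _ _ R => R

def LF (x y : PGame.{u}) : Prop :=
  (leLf x y).2

infixl:50 " ⧏ " => LF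

theorem le_def {x y : PGame.{u}} :
    x ≤ y ↔ (∀ i, x.moveLeft i ⧏ y) ∧ ∀ j, x ⧏ y.moveRight j := by
  cases x; cases y; exact Iff.rfl

theorem lf_def {x y : PGame.{u}} :
    x ⧏ y ↔ (∃ i, x ≤ y.moveLeft i) ∨ ∃ j, x.moveRight j ≤ y := by
  cases x; cases y; exact Iff.rfl

theorem le_zero {x : PGame.{u}} : x ≤ 0 ↔ ∀ i, x.moveLeft i ⧏ 0 := by
  rw [le_def]
  exact and_iff_left fun j => j.elim

theorem zero_le {x : PGame.{u}} : 0 ≤ x ↔ ∀ j, 0 ⧏ x.moveRight j := by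
  rw [le_def]
  exact and_iff_right fun i => i.elim

theorem lf_zero {x : PGame.{u}} : x ⧏ 0 ↔ ∃ j, x.moveRight j ≤ 0 := by
  rw [lf_def]
  exact or_iff_right fun ⟨i, _⟩ => i.elim

theorem zero_lf {x : PGame.{u}} : 0 ⧏ x ↔ ∃ i, 0 ≤ x.moveLeft i := by
  rw [lf_def]
  exact or_iff_left fun ⟨j, _⟩ => j.elim

def HasOptions (x : PGame.{u}) (s : Set PGame.{u}) : Prop :=
  Set.range x.moveLeft = s ∧ Set.range x.moveRight = s

theorem hasOptions_zero : HasOptions 0 ∅ :=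
  ⟨Set.range_eq_empty_iff.2 ⟨PEmpty.elim⟩, Set.range_eq_empty_iff.2 ⟨PEmpty.elim⟩⟩

theorem HasOptions.add {x y : PGame.{u}} {s t : Set PGame.{u}} (hx : HasOptions x s)
    (hy : HasOptions y t) : HasOptions (x + y) ((· + y) '' s ∪ (x + ·) '' t) := by
  obtain ⟨hxL, hxR⟩ := hx
  obtain ⟨hyL, hyR⟩ := hy
  cases x; cases y
  constructor
  · rw [← hxL, ← hyL]
    exact (Sum.range_eq _).trans (by rw [← Set.range_comp, ← Set.range_comp]; rfl)
  · rw [← hxR, ← hyR]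
    exact (Sum.range_eq _).trans (by rw [← Set.range_comp, ← Set.range_comp]; rfl)

theorem hasOptions_nim (o : Ordinal.{u}) : HasOptions (nim o) (nim '' Set.Iio o) := by
  have h : Set.range (Ordinal.typein (α := o.ToType) (· < ·)) = Set.Iio o := by
    ext a
    rw [Ordinal.mem_range_typein_iff, Ordinal.type_toType, Set.mem_Iio]
  rw [nim, HasOptions]
  exact ⟨(Set.range_comp nim _).trans (congrArg _ h), (Set.range_comp nim _).trans (congrArg _ h)⟩

section ImpartialPositions

variable {α : Type*} {r : α → α → Prop} {G : α → PGame.{u}} {P : α → Prop}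

theorem le_zero_iff_and_zero_le_iff_of_hasOptions (hr : WellFounded (flip r))
    (hG : ∀ a, HasOptions (G a) (G '' {b | r a b})) (hP : ∀ a, P a ↔ ∀ b, r a b → ¬ P b)
    (a : α) :
    ((G a ≤ 0 ↔ P a) ∧ (G a ⧏ 0 ↔ ¬ P a)) ∧ ((0 ≤ G a ↔ P a) ∧ (0 ⧏ G a ↔ ¬ P a)) := by
  induction a using hr.induction with
  | _ a ih =>
  have hP' : ¬ P a ↔ ∃ b, r a b ∧ P b := by
    simp only [hP a, not_forall, not_not, exists_prop]
  refine ⟨⟨?_, ?_⟩, ⟨?_, ?_⟩⟩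
  · rw [le_zero, ← Set.forall_mem_range (p := (· ⧏ 0)), (hG a).1, Set.forall_mem_image, hP a]
    exact forall₂_congr fun b hb => (ih b hb).1.2
  · rw [lf_zero, ← Set.exists_range_iff (p := (· ≤ 0)), (hG a).2, Set.exists_mem_image, hP']
    exact exists_congr fun b => and_congr_right fun hb => (ih b hb).1.1
  · rw [zero_le, ← Set.forall_mem_range (p := (0 ⧏ ·)), (hG a).2, Set.forall_mem_image, hP a]
    exact forall₂_congr fun b hb => (ih b hb).2.2
  · rw [zero_lf, ← Set.exists_range_iff (p := (0 ≤ ·)), (hG a).1, Set.exists_mem_image, hP']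
    exact exists_congr fun b => and_congr_right fun hb => (ih b hb).2.1

theorem equiv_zero_iff_of_hasOptions (hr : WellFounded (flip r))
    (hG : ∀ a, HasOptions (G a) (G '' {b | r a b})) (hP : ∀ a, P a ↔ ∀ b, r a b → ¬ P b)
    (a : α) : G a ≈ 0 ↔ P a := by
  obtain ⟨⟨hle, -⟩, ⟨hge, -⟩⟩ := le_zero_iff_and_zero_le_iff_of_hasOptions hr hG hP a
  exact ⟨fun h => hle.1 h.1, fun h => ⟨hle.2 h, hge.2 h⟩⟩

end ImpartialPositions

end SetTheory.PGame

namespace List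

open SetTheory PGame

def nimSum (l : List ℕ) : ℕ :=
  l.foldr (· ^^^ ·) 0

noncomputable def nimGame (l : List ℕ) : PGame.{u} :=
  l.foldr (fun (n : ℕ) G => nim (n : Ordinal) + G) 0

inductive NimMove : List ℕ → List ℕ → Prop
  | head {n m : ℕ} {t : List ℕ} : m < n → NimMove (n :: t) (m :: t)
  | tail {n : ℕ} {t t' : List ℕ} : NimMove t t' → NimMove (n :: t) (n :: t')

@[simp]
theorem nimSum_cons (n : ℕ) (t : List ℕ) : nimSum (n :: t) = n ^^^ nimSum t := rfl

@[simp]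
theorem nimGame_nil : nimGame.{u} [] = 0 := rfl

@[simp]
theorem nimGame_cons (n : ℕ) (t : List ℕ) : nimGame.{u} (n :: t) = nim n + nimGame t := rfl

theorem not_nimMove_nil (l : List ℕ) : ¬ NimMove [] l := nofun

theorem nimMove_cons_iff {n : ℕ} {t l : List ℕ} :
    NimMove (n :: t) l ↔ (∃ m < n, m :: t = l) ∨ ∃ t', NimMove t t' ∧ n :: t' = l := by
  constructor
  · rintro (@⟨_, m, _, hm⟩ | @⟨_, _, t', ht⟩)
    exacts [Or.inl ⟨m, hm, rfl⟩, Or.inr ⟨t', ht, rfl⟩]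
  · rintro (⟨m, hm, rfl⟩ | ⟨t', ht, rfl⟩)
    exacts [NimMove.head hm, NimMove.tail ht]

theorem NimMove.sum_lt {l l' : List ℕ} (h : NimMove l l') : l'.sum < l.sum := by
  induction h with
  | head h => simp only [sum_cons]; omega
  | tail _ ih => simp only [sum_cons]; omega

theorem wellFounded_flip_nimMove : WellFounded (flip NimMove) :=
  Subrelation.wf (fun h => NimMove.sum_lt h) (measure List.sum).wf

theorem NimMove.nimSum_ne {l l' : List ℕ} (h : NimMove l l') : l'.nimSum ≠ l.nimSum := by
  induction h with
  | head h => simpa using h.ne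
  | tail _ ih => simpa using ih

theorem exists_nimMove_nimSum_eq_of_lt :
    ∀ {l : List ℕ} {a : ℕ}, a < l.nimSum → ∃ l', NimMove l l' ∧ l'.nimSum = a
  | [], a, h => absurd h (Nat.not_lt_zero a)
  | n :: t, a, h => by
    rw [nimSum_cons] at h
    rcases Nat.lt_xor_cases h with h | h
    · exact ⟨(a ^^^ t.nimSum) :: t, NimMove.head h, by simp⟩
    · obtain ⟨t', ht, hs⟩ := exists_nimMove_nimSum_eq_of_lt h
      exact ⟨n :: t', NimMove.tail ht, by simp [hs]⟩

theorem nimSum_eq_zero_iff (l : List ℕ) :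
    l.nimSum = 0 ↔ ∀ l', NimMove l l' → l'.nimSum ≠ 0 := by
  refine ⟨fun h l' hl => h ▸ hl.nimSum_ne, fun h => ?_⟩
  by_contra hne
  obtain ⟨l', hl, hs⟩ := exists_nimMove_nimSum_eq_of_lt (Nat.pos_of_ne_zero hne)
  exact h l' hl hs

theorem hasOptions_nimGame (l : List ℕ) :
    (nimGame.{u} l).HasOptions (nimGame '' {l' | NimMove l l'}) := by
  induction l with
  | nil => simpa [not_nimMove_nil] using hasOptions_zero
  | cons n t ih =>
    rw [nimGame_cons]
    convert (hasOptions_nim (n : Ordinal)).add ih using 1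
    rw [← Ordinal.natCast_image_Iio]
    ext g
    simp only [Set.mem_image, Set.mem_union, Set.mem_ofPred_eq, Set.mem_Iio, Set.image_image,
      nimMove_cons_iff, or_and_right, exists_or, exists_exists_and_eq_and, nimGame_cons]

end List

theorem nim_sum_equiv_zero_iff (l : List ℕ) :
    (l.foldr (fun (n : ℕ) (G : SetTheory.PGame) =>
        SetTheory.PGame.nim (n : Ordinal) + G) 0 ≈ 0) ↔
      l.foldr (· ^^^ ·) 0 = 0 := by
  show l.nimGame ≈ 0 ↔ l.nimSum = 0
  exact SetTheory.PGame.equiv_zero_iff_of_hasOptions List.wellFounded_flip_nimMove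
    List.hasOptions_nimGame List.nimSum_eq_zero_iff l
end

section
/- Let X be a positive natural number and let g = (Nat.digits 2 X).count 1 be the number of 1s in the binary representation of X. Then the number of unordered pairs of positive integers with sum X and XOR equal to X, i.e., the cardinality of {(a, b) : 0 < a ∧ a ≤ b ∧ a + b = X ∧ a XOR b = X}, equals 2^(g − 1) − 1. -/
/-!
Since `a + b = (a ^^^ b) + 2 * (a &&& b)`, the conditions `a + b = X` and `a ^^^ b = X` say
exactly that the 1 bits of `a` and of `b` partition the 1 bits of `X`. Hence there are `2 ^ g`
ordered pairs; discarding `(0, X)` and `(X, 0)` and identifying `(a, b)` with `(b, a)` (never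
equal, as `a ^^^ a = 0`) leaves `(2 ^ g - 2) / 2` pairs.
-/

namespace Nat

theorem count_one_digits_two (n : ℕ) : (digits 2 n).count 1 = n.bitIndices.length := by
  induction n using Nat.binaryRec with
  | zero => simp
  | bit b n ih =>
    cases b
    · rcases eq_or_ne n 0 with rfl | hn
      · simp
      · rw [bit_false, digits_def' (n := 2 * n) one_lt_two (by omega)]
        simp [ih]
    · rw [bit_true, digits_def' (n := 2 * n + 1) one_lt_two (by omega)]
      simp [ih, Nat.mul_add_div]

theorem add_eq_xor_add_two_mul_and (a b : ℕ) : a + b = (a ^^^ b) + 2 * (a &&& b) := by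
  induction a using Nat.binaryRec generalizing b with
  | zero => simp
  | bit x a ih =>
    induction b using Nat.binaryRec with
    | zero => simp
    | bit y b =>
      rw [xor_bit, land_bit]
      have := ih b
      cases x <;> cases y <;> simp only [bit_val, Bool.toNat_true, Bool.toNat_false, Bool.bne_true,
        Bool.bne_false, bne_self_eq_false, Bool.not_false, Bool.and_self, Bool.and_true,
        Bool.and_false] <;> omega

theorem add_eq_and_xor_eq_iff {a b n : ℕ} :
    a + b = n ∧ a ^^^ b = n ↔ a &&& b = 0 ∧ a ^^^ b = n := by
  have := add_eq_xor_add_two_mul_and a b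
  constructor <;> rintro ⟨h₁, h₂⟩ <;> refine ⟨?_, h₂⟩ <;> omega

end Nat

namespace Finset

open scoped symmDiff

theorem equivBitIndices_xor (a b : ℕ) :
    equivBitIndices (a ^^^ b) = equivBitIndices a ∆ equivBitIndices b := by
  ext i
  simp only [equivBitIndices_apply, List.mem_toFinset, Nat.mem_bitIndices, Nat.testBit_xor,
    mem_symmDiff]
  cases a.testBit i <;> cases b.testBit i <;> simp

theorem equivBitIndices_and (a b : ℕ) :
    equivBitIndices (a &&& b) = equivBitIndices a ∩ equivBitIndices b := by
  ext i
  simp [Nat.testBit_and]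

theorem ncard_disjoint_union_eq {α : Type*} [DecidableEq α] (B : Finset α) :
    {p : Finset α × Finset α | Disjoint p.1 p.2 ∧ p.1 ∪ p.2 = B}.ncard = 2 ^ B.card := by
  have : {p : Finset α × Finset α | Disjoint p.1 p.2 ∧ p.1 ∪ p.2 = B} =
      (fun s ↦ (s, B \ s)) '' B.powerset := by
    ext ⟨s, t⟩
    simp only [Set.mem_ofPred_eq, coe_powerset, Set.mem_image, Set.mem_preimage,
      Set.mem_powerset_iff, coe_subset, Prod.mk.injEq]
    constructor
    · rintro ⟨hst, rfl⟩
      exact ⟨s, subset_union_left, rfl, union_sdiff_cancel_left hst⟩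
    · rintro ⟨s, hs, rfl, rfl⟩
      exact ⟨disjoint_sdiff, union_sdiff_of_subset hs⟩
  rw [this, Set.ncard_image_of_injective _ fun s t h ↦ congrArg Prod.fst h, Set.ncard_coe_finset,
    card_powerset]

end Finset

open Finset in
theorem Nat.ncard_add_eq_xor_eq (n : ℕ) :
    {p : ℕ × ℕ | p.1 + p.2 = n ∧ p.1 ^^^ p.2 = n}.ncard = 2 ^ (digits 2 n).count 1 := by
  let e := equivBitIndices.prodCongr equivBitIndices
  have : {p : ℕ × ℕ | p.1 + p.2 = n ∧ p.1 ^^^ p.2 = n} =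
      e ⁻¹' {q | Disjoint q.1 q.2 ∧ q.1 ∪ q.2 = equivBitIndices n} := by
    ext ⟨a, b⟩
    simp only [Set.mem_ofPred_eq, Set.mem_preimage, add_eq_and_xor_eq_iff, e,
      Equiv.prodCongr_apply, Prod.map]
    rw [← equivBitIndices.injective.eq_iff, ← equivBitIndices.injective.eq_iff,
      equivBitIndices_and, equivBitIndices_xor, show equivBitIndices 0 = ∅ from rfl,
      ← disjoint_iff_inter_eq_empty]
    exact and_congr_right fun h ↦ by rw [h.symmDiff_eq_sup, sup_eq_union]
  rw [this, Set.ncard_preimage_of_injective_subset_range e.injective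
    (by simp [e.surjective.range_eq]), ncard_disjoint_union_eq, count_one_digits_two,
    equivBitIndices_apply, List.toFinset_card_of_nodup bitIndices_nodup]

theorem Set.two_mul_ncard_fst_le_snd {α : Type*} [LinearOrder α] {S : Set (α × α)}
    (hS : S.Finite) (hswap : ∀ p ∈ S, p.swap ∈ S) (hdiag : ∀ p ∈ S, p.1 ≠ p.2) :
    2 * {p ∈ S | p.1 ≤ p.2}.ncard = S.ncard := by
  set L := {p ∈ S | p.1 ≤ p.2}
  have hL : L.Finite := hS.subset (Set.sep_subset _ _)
  have hsplit : L ∪ Prod.swap '' L = S := by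
    refine Set.Subset.antisymm (Set.union_subset (Set.sep_subset _ _) ?_) fun p hp ↦ ?_
    · rintro _ ⟨p, hp, rfl⟩
      exact hswap p hp.1
    · rcases le_total p.1 p.2 with h | h
      · exact Or.inl ⟨hp, h⟩
      · exact Or.inr ⟨p.swap, ⟨hswap p hp, h⟩, p.swap_swap⟩
  have hdisj : Disjoint L (Prod.swap '' L) := by
    refine Set.disjoint_left.2 fun p hp ⟨q, hq, hqp⟩ ↦ hdiag p hp.1 ?_
    subst hqp
    exact le_antisymm hp.2 hq.2
  calc 2 * L.ncard = L.ncard + (Prod.swap '' L).ncard := by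
        rw [Set.ncard_image_of_injective _ Prod.swap_injective]; ring
    _ = S.ncard := by rw [← Set.ncard_union_eq hdisj hL (hL.image _), hsplit]

theorem count_pairs_sum_eq_xor (X : ℕ) (hX : 0 < X)
    (g : ℕ) (hg : g = (Nat.digits 2 X).count 1) :
    {p : ℕ × ℕ | 0 < p.1 ∧ p.1 ≤ p.2 ∧ p.1 + p.2 = X ∧ p.1 ^^^ p.2 = X}.ncard =
      2 ^ (g - 1) - 1 := by
  set P := {p : ℕ × ℕ | p.1 + p.2 = X ∧ p.1 ^^^ p.2 = X}
  have hP : P.ncard = 2 ^ g := hg ▸ Nat.ncard_add_eq_xor_eq X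
  have hPfin : P.Finite := Set.finite_of_ncard_pos (by rw [hP]; positivity)
  have hE : {(0, X), (X, 0)} ⊆ P := by simp [P, Set.insert_subset_iff]
  have hcount : 2 * {p ∈ P \ {(0, X), (X, 0)} | p.1 ≤ p.2}.ncard = 2 ^ g - 2 := by
    rw [Set.two_mul_ncard_fst_le_snd hPfin.sdiff ?_ ?_, Set.ncard_sdiff hE,
      Set.ncard_pair (by simp [hX.ne]), hP]
    · rintro ⟨a, b⟩ ⟨⟨hsum, hxor⟩, hne⟩
      refine ⟨⟨by simp [← hsum, add_comm], by simp [← hxor, Nat.xor_comm]⟩, ?_⟩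
      exact fun h ↦ hne (by simpa [or_comm, and_comm] using h)
    · rintro ⟨a, b⟩ ⟨⟨-, hxor⟩, -⟩ (rfl : a = b)
      rw [Nat.xor_self] at hxor
      omega
  have hpairs : {p : ℕ × ℕ | 0 < p.1 ∧ p.1 ≤ p.2 ∧ p.1 + p.2 = X ∧ p.1 ^^^ p.2 = X} =
      {p ∈ P \ {(0, X), (X, 0)} | p.1 ≤ p.2} := by
    ext ⟨a, b⟩
    simp only [P, Set.mem_ofPred_eq, Set.mem_sdiff, Set.mem_insert_iff, Set.mem_singleton_iff,
      not_or, Prod.mk.injEq, not_and]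
    omega
  rw [hpairs]
  cases g with
  | zero => simpa using hcount
  | succ g =>
    rw [pow_succ] at hcount
    rw [Nat.add_sub_cancel]
    omega
end

section
/- Let S and X be natural numbers with 0 < X, X < S, S − X even, and ((S − X)/2) AND X = 0, and let g = (Nat.digits 2 X).count 1 be the number of 1s in the binary representation of X. Then the number of unordered pairs of natural numbers with sum S and XOR equal to X, i.e., the cardinality of {(a, b) : a ≤ b ∧ a + b = S ∧ a XOR b = X}, equals 2^(g − 1). (Moreover all such pairs automatically consist of positive integers.) -/
/-!
Since `a + b = (a ^^^ b) + 2 * (a &&& b)`, the ordered pairs with sum `S` and xor `X` are exactly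
the pairs with xor `X` and bitwise and `C = (S - X) / 2`. As `C` and `X` have disjoint bits, these
are the pairs `(C ^^^ u, C ^^^ u ^^^ X)` with `u` a submask of `X`, so there are `2 ^ g` of them.
Swapping the coordinates pairs them off without fixed points (as `X ≠ 0`), so exactly half of them
satisfy `a ≤ b`.
-/

theorem Nat.add_eq_xor_add_two_mul_land (a b : ℕ) : a + b = (a ^^^ b) + 2 * (a &&& b) := by
  induction a using Nat.binaryRec generalizing b with
  | zero => simp
  | bit ba m ih =>
    induction b using Nat.bitCasesOn with
    | bit bb n =>
      rw [Nat.xor_bit, Nat.land_bit, Nat.bit_val, Nat.bit_val, Nat.bit_val, Nat.bit_val]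
      have := ih n
      cases ba <;> cases bb <;> simp <;> omega

theorem Nat.count_one_digits_two_eq_length_bitIndices (n : ℕ) :
    (Nat.digits 2 n).count 1 = n.bitIndices.length := by
  induction n using Nat.evenOddRec with
  | h0 => simp
  | h_even n ih =>
    rcases eq_or_ne n 0 with rfl | hn
    · simp
    rw [Nat.digits_def' one_lt_two (by omega)]
    simp [ih]
  | h_odd n ih =>
    rw [Nat.digits_def' one_lt_two (by omega)]
    simp [ih, Nat.mul_add_div]

theorem Nat.land_eq_left_iff {u X : ℕ} : u &&& X = u ↔ ∀ i, u.testBit i → X.testBit i := by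
  refine ⟨fun h i hi => ?_, fun h => Nat.eq_of_testBit_eq fun i => ?_⟩
  · rw [← h, Nat.testBit_land] at hi
    exact (Bool.and_eq_true _ _ ▸ hi).2
  · rw [Nat.testBit_land]
    cases hu : u.testBit i <;> simp [h i, hu]

theorem Nat.ncard_setOf_land_eq_left (X : ℕ) :
    {u : ℕ | u &&& X = u}.ncard = 2 ^ X.bitIndices.length := by
  have hsub : {u : ℕ | u &&& X = u} =
      Finset.equivBitIndices ⁻¹' ↑X.bitIndices.toFinset.powerset := by
    ext u
    simp [Nat.land_eq_left_iff]
  rw [hsub, Set.ncard_preimage_of_injective_subset_range Finset.equivBitIndices.injective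
    (by simp [Finset.equivBitIndices.surjective.range_eq]), Set.ncard_coe_finset,
    Finset.card_powerset, List.toFinset_card_of_nodup Nat.bitIndices_nodup]

theorem Nat.setOf_xor_land_eq_image {X C : ℕ} (hCX : C &&& X = 0) :
    {p : ℕ × ℕ | p.1 ^^^ p.2 = X ∧ p.1 &&& p.2 = C} =
      (fun u => (C ^^^ u, C ^^^ u ^^^ X)) '' {u | u &&& X = u} := by
  ext ⟨a, b⟩
  simp only [Set.mem_ofPred_eq, Set.mem_image, Prod.mk.injEq]
  constructor
  · rintro ⟨rfl, rfl⟩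
    refine ⟨a &&& (a ^^^ b), by rw [Nat.land_assoc, Nat.and_self], ?_, ?_⟩
    all_goals
      refine Nat.eq_of_testBit_eq fun i => ?_
      simp only [Nat.testBit_xor, Nat.testBit_land]
      cases a.testBit i <;> cases b.testBit i <;> rfl
  · rintro ⟨u, hu, rfl, rfl⟩
    refine ⟨xor_cancel_left _ _, Nat.eq_of_testBit_eq fun i => ?_⟩
    have hCXi : (C.testBit i && X.testBit i) = false := by
      rw [← Nat.testBit_land, hCX, Nat.zero_testBit]
    have hui := Nat.land_eq_left_iff.mp hu i
    simp only [Nat.testBit_xor, Nat.testBit_land]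
    cases hc : C.testBit i <;> cases hu : u.testBit i <;> cases hx : X.testBit i <;> simp_all

theorem Set.two_mul_ncard_setOf_le_of_swap {α : Type*} [LinearOrder α] {O : Set (α × α)}
    (hO : O.Finite) (hswap : ∀ p ∈ O, p.swap ∈ O) (hdiag : ∀ p ∈ O, p.1 ≠ p.2) :
    2 * {p | p.1 ≤ p.2 ∧ p ∈ O}.ncard = O.ncard := by
  set P := {p | p.1 ≤ p.2 ∧ p ∈ O}
  have hPO : P ⊆ O := fun p hp => hp.2
  have hcompl : Prod.swap '' P = O \ P := by
    ext p
    refine ⟨?_, fun ⟨hp, hnP⟩ => ⟨p.swap, ⟨?_, hswap p hp⟩, p.swap_swap⟩⟩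
    · rintro ⟨q, ⟨hle, hq⟩, rfl⟩
      exact ⟨hswap q hq, fun ⟨hle', _⟩ => hdiag q hq (le_antisymm hle hle')⟩
    · exact (not_le.mp fun h => hnP ⟨h, hp⟩).le
  rw [two_mul, ← Set.ncard_sdiff_add_ncard_of_subset hPO hO, ← hcompl,
    Set.ncard_image_of_injective _ Prod.swap_injective]

theorem count_pairs_sum_xor (S X : ℕ) (hX : 0 < X) (hXS : X < S)
    (heven : (S - X) % 2 = 0) (hand : ((S - X) / 2) &&& X = 0)
    (g : ℕ) (hg : g = (Nat.digits 2 X).count 1) :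
    {p : ℕ × ℕ | p.1 ≤ p.2 ∧ p.1 + p.2 = S ∧ p.1 ^^^ p.2 = X}.ncard =
      2 ^ (g - 1) := by
  set C := (S - X) / 2
  set O := {p : ℕ × ℕ | p.1 + p.2 = S ∧ p.1 ^^^ p.2 = X}
  have hO : O = {p : ℕ × ℕ | p.1 ^^^ p.2 = X ∧ p.1 &&& p.2 = C} := by
    ext p
    have := Nat.add_eq_xor_add_two_mul_land p.1 p.2
    simp only [O, Set.mem_ofPred_eq]
    omega
  have hOcard : O.ncard = 2 ^ g := by
    rw [hO, Nat.setOf_xor_land_eq_image hand,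
      Set.ncard_image_of_injective _ fun u v h => Nat.xor_right_injective (congrArg Prod.fst h),
      Nat.ncard_setOf_land_eq_left, hg, Nat.count_one_digits_two_eq_length_bitIndices]
  have hg_pos : 0 < g := by
    rw [hg, Nat.count_one_digits_two_eq_length_bitIndices, List.length_pos_iff]
    intro hnil
    simpa [hnil] using (Nat.sum_map_two_pow_bitIndices X).trans_gt hX
  have hhalf := Set.two_mul_ncard_setOf_le_of_swap (O := O)
    (Set.finite_of_ncard_ne_zero (by simp [hOcard]))
    (fun p hp => ⟨by rw [← hp.1, add_comm]; rfl, by rw [← hp.2, Nat.xor_comm]; rfl⟩)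
    (fun p hp hdiag => hX.ne' (by rw [← hp.2, hdiag, Nat.xor_self]))
  obtain ⟨k, rfl⟩ : ∃ k, g = k + 1 := ⟨g - 1, by omega⟩
  rw [hOcard, pow_succ] at hhalf
  change {p | p.1 ≤ p.2 ∧ p ∈ O}.ncard = 2 ^ (k + 1 - 1)
  rw [Nat.add_sub_cancel]
  omega
end

section
/- For every natural number S, three times the number of 3-pile zero-nim positions with total sum S equals the sum, over n from 1 to S − 1, of the number of unordered pairs of positive integers with sum n and XOR equal to S − n. That is: 3 * |{(a, b, c) : 0 < a ∧ a < b ∧ b < c ∧ a + b + c = S ∧ a XOR b XOR c = 0}| = ∑_{n=1}^{S−1} |{(a, b) : 0 < a ∧ a ≤ b ∧ a + b = n ∧ a XOR b = S − n}|. -/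
/-! Every zero-nim position `a < b < c` is counted three times on the right, once for each choice
of fixed pile `x ∈ {a, b, c}`: the other two piles have sum `S - x` and, since the total XOR
vanishes, XOR equal to `x`. Conversely a pair `p ≤ q` with `p + q = n` and `p ^^^ q = S - n ≥ 1`
completes to the zero-nim triple `{p, q, S - n}`, whose entries are automatically distinct. -/

theorem Set.ncard_eq_sum_ncard_fiberwise {α β : Type*} {s : Set α} (hs : s.Finite)
    {f : α → β} {t : Finset β} (H : Set.MapsTo f s t) :
    s.ncard = ∑ b ∈ t, {a ∈ s | f a = b}.ncard := by
  classical
  rw [Set.ncard_eq_toFinset_card s hs,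
    Finset.card_eq_sum_card_fiberwise fun a ha => H (hs.mem_toFinset.mp ha)]
  refine Finset.sum_congr rfl fun b _ => ?_
  rw [← Set.ncard_coe_finset, Finset.coe_filter]
  simp only [Set.Finite.mem_toFinset]

section SortedTriples

variable {α : Type*} [LinearOrder α]

def sortedTriples (P : α → α → α → Prop) : Set (α × α × α) :=
  {t | t.1 < t.2.1 ∧ t.2.1 < t.2.2 ∧ P t.1 t.2.1 t.2.2}

/-- According to whether `r` lies above, between or below `p < q`. -/
theorem setOf_lt_eq_sorted_union_image (P : α → α → α → Prop)
    (hP₁₂ : ∀ a b c, P a b c → P b a c) (hP₂₃ : ∀ a b c, P a b c → P a c b)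
    (hne : ∀ a b c, P a b c → c ≠ a ∧ c ≠ b) :
    {t : α × α × α | t.1 < t.2.1 ∧ P t.1 t.2.1 t.2.2} =
      sortedTriples P ∪ (fun t => (t.1, t.2.2, t.2.1)) '' sortedTriples P ∪
        (fun t => (t.2.1, t.2.2, t.1)) '' sortedTriples P := by
  ext ⟨p, q, r⟩
  simp only [sortedTriples, Set.mem_ofPred_eq, Set.mem_union, Set.mem_image, Prod.exists,
    Prod.mk.injEq]
  constructor
  · rintro ⟨hpq, hP⟩
    obtain ⟨hrp, hrq⟩ := hne p q r hP
    rcases hrq.lt_or_gt with hrq | hqr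
    · rcases hrp.lt_or_gt with hrp | hpr
      · exact Or.inr ⟨r, p, q, ⟨hrp, hpq, hP₁₂ _ _ _ (hP₂₃ _ _ _ hP)⟩, rfl, rfl, rfl⟩
      · exact Or.inl (Or.inr ⟨p, r, q, ⟨hpr, hrq, hP₂₃ _ _ _ hP⟩, rfl, rfl, rfl⟩)
    · exact Or.inl (Or.inl ⟨hpq, hqr, hP⟩)
  · rintro ((h | ⟨a, b, c, ⟨hab, hbc, hP⟩, rfl, rfl, rfl⟩) | ⟨a, b, c, ⟨hab, hbc, hP⟩, rfl, rfl, rfl⟩)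
    · exact ⟨h.1, h.2.2⟩
    · exact ⟨hab.trans hbc, hP₂₃ _ _ _ hP⟩
    · exact ⟨hbc, hP₂₃ _ _ _ (hP₁₂ _ _ _ hP)⟩

theorem three_mul_ncard_sorted_eq_ncard_lt (P : α → α → α → Prop)
    (hP₁₂ : ∀ a b c, P a b c → P b a c) (hP₂₃ : ∀ a b c, P a b c → P a c b)
    (hne : ∀ a b c, P a b c → c ≠ a ∧ c ≠ b)
    (hfin : {t : α × α × α | t.1 < t.2.1 ∧ P t.1 t.2.1 t.2.2}.Finite) :
    3 * (sortedTriples P).ncard = {t : α × α × α | t.1 < t.2.1 ∧ P t.1 t.2.1 t.2.2}.ncard := by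
  rw [setOf_lt_eq_sorted_union_image P hP₁₂ hP₂₃ hne]
  set T := sortedTriples P
  set mid : α × α × α → α × α × α := fun t => (t.1, t.2.2, t.2.1)
  set low : α × α × α → α × α × α := fun t => (t.2.1, t.2.2, t.1)
  have hmid : mid.Injective := fun x y h => by
    simp only [mid, Prod.mk.injEq] at h
    exact Prod.ext h.1 (Prod.ext h.2.2 h.2.1)
  have hlow : low.Injective := fun x y h => by
    simp only [low, Prod.mk.injEq] at h
    exact Prod.ext h.2.2 (Prod.ext h.1 h.2.1)
  have hTfin : T.Finite := hfin.subset fun t ht => ⟨ht.1, ht.2.2⟩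
  have hdisj₁ : Disjoint T (mid '' T) := by
    rw [Set.disjoint_left]
    rintro _ ⟨-, hbc, -⟩ ⟨⟨a, b, c⟩, ⟨-, hbc', -⟩, rfl⟩
    exact lt_asymm hbc hbc'
  have hdisj₂ : Disjoint (T ∪ mid '' T) (low '' T) := by
    rw [Set.disjoint_left]
    rintro _ hx ⟨⟨a, b, c⟩, ⟨hab, -, -⟩, rfl⟩
    rcases hx with ⟨hbc, hca, -⟩ | ⟨⟨a', b', c'⟩, ⟨hab', -, -⟩, h⟩
    · exact lt_asymm hab (hbc.trans hca)
    · simp only [mid, low, Prod.mk.injEq] at h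
      obtain ⟨rfl, -, rfl⟩ := h
      exact lt_asymm hab hab'
  rw [Set.ncard_union_eq hdisj₂ (hTfin.union (hTfin.image _)) (hTfin.image _),
    Set.ncard_union_eq hdisj₁ hTfin (hTfin.image _), Set.ncard_image_of_injective _ hmid,
    Set.ncard_image_of_injective _ hlow]
  ring

end SortedTriples

def IsZeroNim (a b c : ℕ) : Prop :=
  0 < a ∧ 0 < b ∧ 0 < c ∧ a ^^^ b ^^^ c = 0

namespace IsZeroNim

variable {a b c : ℕ}

theorem xor_eq (h : IsZeroNim a b c) : a ^^^ b = c :=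
  Nat.eq_of_xor_eq_zero h.2.2.2

theorem swap₁₂ (h : IsZeroNim a b c) : IsZeroNim b a c :=
  ⟨h.2.1, h.1, h.2.2.1, by rw [Nat.xor_comm b a]; exact h.2.2.2⟩

theorem swap₂₃ (h : IsZeroNim a b c) : IsZeroNim a c b :=
  ⟨h.1, h.2.2.1, h.2.1, by rw [Nat.xor_right_comm]; exact h.2.2.2⟩

theorem third_ne (h : IsZeroNim a b c) : c ≠ a ∧ c ≠ b := by
  have hc := h.xor_eq
  constructor <;> rintro rfl
  · exact h.2.1.ne' (by simpa using congrArg (c ^^^ ·) hc)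
  · exact h.1.ne' (by simpa using congrArg (· ^^^ c) hc)

end IsZeroNim

theorem finite_setOf_sum_eq (S : ℕ) : {t : ℕ × ℕ × ℕ | t.1 + t.2.1 + t.2.2 = S}.Finite :=
  ((Set.finite_Iic S).prod ((Set.finite_Iic S).prod (Set.finite_Iic S))).subset
    fun t (ht : t.1 + t.2.1 + t.2.2 = S) =>
      ⟨Set.mem_Iic.mpr (by omega), Set.mem_Iic.mpr (by omega), Set.mem_Iic.mpr (by omega)⟩

theorem image_pairs_eq_fiber_zeroNim {S n : ℕ} (hn : n < S) :
    (fun p : ℕ × ℕ => (p.1, p.2, S - n)) ''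
        {p | 0 < p.1 ∧ p.1 ≤ p.2 ∧ p.1 + p.2 = n ∧ p.1 ^^^ p.2 = S - n} =
      {t | (t.1 < t.2.1 ∧ t.1 + t.2.1 + t.2.2 = S ∧ IsZeroNim t.1 t.2.1 t.2.2) ∧
        t.1 + t.2.1 = n} := by
  ext ⟨a, b, c⟩
  simp only [Set.mem_image, Set.mem_ofPred_eq, Prod.exists, Prod.mk.injEq, IsZeroNim]
  constructor
  · rintro ⟨p, q, ⟨hp, hpq, rfl, hxor⟩, rfl, rfl, rfl⟩
    have hne : p ≠ q := by
      rintro rfl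
      rw [Nat.xor_self] at hxor
      omega
    refine ⟨⟨lt_of_le_of_ne hpq hne, by omega, hp, by omega, by omega, ?_⟩, rfl⟩
    rw [hxor, Nat.xor_self]
  · rintro ⟨⟨hab, hsum, ha, -, -, hxor⟩, rfl⟩
    refine ⟨a, b, ⟨ha, hab.le, rfl, ?_⟩, rfl, rfl, by omega⟩
    rw [Nat.eq_of_xor_eq_zero hxor]
    omega

theorem setOf_zeroNim_eq_sortedTriples (S : ℕ) :
    {t : ℕ × ℕ × ℕ | 0 < t.1 ∧ t.1 < t.2.1 ∧ t.2.1 < t.2.2 ∧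
        t.1 + t.2.1 + t.2.2 = S ∧ t.1 ^^^ t.2.1 ^^^ t.2.2 = 0} =
      sortedTriples fun a b c => a + b + c = S ∧ IsZeroNim a b c := by
  ext t
  simp only [sortedTriples, Set.mem_ofPred_eq, IsZeroNim]
  constructor
  · rintro ⟨ha, hab, hbc, hsum, hxor⟩
    exact ⟨hab, hbc, hsum, ha, by omega, by omega, hxor⟩
  · rintro ⟨hab, hbc, hsum, ha, -, -, hxor⟩
    exact ⟨ha, hab, hbc, hsum, hxor⟩

theorem three_mul_zero_nim_count (S : ℕ) :
    3 * {t : ℕ × ℕ × ℕ | 0 < t.1 ∧ t.1 < t.2.1 ∧ t.2.1 < t.2.2 ∧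
          t.1 + t.2.1 + t.2.2 = S ∧ t.1 ^^^ t.2.1 ^^^ t.2.2 = 0}.ncard =
      ∑ n ∈ Finset.Icc 1 (S - 1),
        {p : ℕ × ℕ | 0 < p.1 ∧ p.1 ≤ p.2 ∧ p.1 + p.2 = n ∧
          p.1 ^^^ p.2 = S - n}.ncard := by
  rw [setOf_zeroNim_eq_sortedTriples]
  set P : ℕ → ℕ → ℕ → Prop := fun a b c => a + b + c = S ∧ IsZeroNim a b c
  have hfin : {t : ℕ × ℕ × ℕ | t.1 < t.2.1 ∧ P t.1 t.2.1 t.2.2}.Finite :=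
    (finite_setOf_sum_eq S).subset fun t ht => ht.2.1
  have hmaps : Set.MapsTo (fun t : ℕ × ℕ × ℕ => t.1 + t.2.1)
      {t | t.1 < t.2.1 ∧ P t.1 t.2.1 t.2.2} (Finset.Icc 1 (S - 1)) := by
    rintro t ⟨-, hsum, ha, -, hc, -⟩
    simp only [Finset.coe_Icc, Set.mem_Icc]
    omega
  rw [three_mul_ncard_sorted_eq_ncard_lt P (fun _ _ _ h => ⟨by omega, h.2.swap₁₂⟩)
    (fun _ _ _ h => ⟨by omega, h.2.swap₂₃⟩) (fun _ _ _ h => h.2.third_ne) hfin,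
    Set.ncard_eq_sum_ncard_fiberwise hfin hmaps]
  refine Finset.sum_congr rfl fun n hn => ?_
  have hinj : (fun p : ℕ × ℕ => (p.1, p.2, S - n)).Injective := fun p q h => by
    simp only [Prod.mk.injEq] at h
    exact Prod.ext h.1 h.2.1
  rw [← Set.ncard_image_of_injective _ hinj,
    image_pairs_eq_fiber_zeroNim (by rw [Finset.mem_Icc] at hn; omega)]
  rfl
end

section
/- Let k be a natural number with k ≥ 1. The number of positions of the form (a, b, a + b) with nim-sum zero, with 0 < a < b, in which the two larger piles b and a + b each have exactly k binary digits, equals 3^(k−1) − 2^(k−1). Formally: |{(a, b) : 0 < a ∧ a < b ∧ a AND b = 0 ∧ 2^(k−1) ≤ b ∧ b < 2^k}| = 3^(k−1) − 2^(k−1). -/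
/-!
Write the larger pile as `b = 2 ^ m + c` with `c < 2 ^ m`. Since bit `m` of `b` is set and
`a < b < 2 ^ (m + 1)`, bit `m` of `a` is clear, so `a < 2 ^ m` and `a AND b = 0` iff `a AND c = 0`.
The positions therefore correspond to the pairs `(a, c)` of `m`-bit numbers with disjoint bits and
`a ≠ 0`. Each of the `m` bits lies in `a`, in `c`, or in neither, giving `3 ^ m` disjoint pairs, of
which `2 ^ m` have `a = 0`.
-/

open Finset

namespace Nat

theorem and_eq_zero_iff_mod_two_and_div_two {a c : ℕ} :
    a &&& c = 0 ↔ a % 2 &&& c % 2 = 0 ∧ a / 2 &&& c / 2 = 0 := by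
  have h := Nat.and_mod_two_pow (a := a) (b := c) (n := 1)
  rw [← Nat.and_div_two, ← pow_one 2, ← h]
  omega

theorem and_two_pow_add_eq_zero_iff {m a c : ℕ} (ha : a < 2 ^ m) (hc : c < 2 ^ m) :
    a &&& (2 ^ m + c) = 0 ↔ a &&& c = 0 := by
  rw [add_comm, ← or_two_pow_eq_add_of_lt hc, and_or_distrib_left, and_two_pow,
    testBit_lt_two_pow ha]
  simp

theorem two_pow_add_and_two_pow_add_ne_zero {m a c : ℕ} (ha : a < 2 ^ m) (hc : c < 2 ^ m) :
    (2 ^ m + a) &&& (2 ^ m + c) ≠ 0 := by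
  intro h
  have := congrArg (testBit · m) h
  simp [testBit_two_pow_add_eq, testBit_lt_two_pow ha, testBit_lt_two_pow hc] at this

end Nat

def disjointPairsBelow (m : ℕ) : Finset (ℕ × ℕ) :=
  {p ∈ range (2 ^ m) ×ˢ range (2 ^ m) | p.1 &&& p.2 = 0}

theorem mem_disjointPairsBelow {m : ℕ} {p : ℕ × ℕ} :
    p ∈ disjointPairsBelow m ↔ p.1 < 2 ^ m ∧ p.2 < 2 ^ m ∧ p.1 &&& p.2 = 0 := by
  simp [disjointPairsBelow, and_assoc]

theorem card_disjointPairsBelow (m : ℕ) : #(disjointPairsBelow m) = 3 ^ m := by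
  induction m with
  | zero => rfl
  | succ m ih =>
    have hlow : #(disjointPairsBelow 1) = 3 := by decide
    rw [pow_succ, ← ih, ← hlow, ← card_product]
    -- split off the lowest bit of both coordinates
    apply card_nbij' (fun p => ((p.1 / 2, p.2 / 2), (p.1 % 2, p.2 % 2)))
      (fun q => (2 * q.1.1 + q.2.1, 2 * q.1.2 + q.2.2))
    · rintro ⟨a, c⟩ h
      simp only [coe_product, Set.mem_prod, mem_coe, mem_disjointPairsBelow] at h ⊢
      rw [Nat.and_eq_zero_iff_mod_two_and_div_two] at h
      omega
    · rintro ⟨⟨a, c⟩, ⟨e, f⟩⟩ h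
      simp only [coe_product, Set.mem_prod, mem_coe, mem_disjointPairsBelow] at h ⊢
      rw [Nat.and_eq_zero_iff_mod_two_and_div_two]
      have h1 : (2 * a + e) / 2 = a := by omega
      have h2 : (2 * c + f) / 2 = c := by omega
      have h3 : (2 * a + e) % 2 = e := by omega
      have h4 : (2 * c + f) % 2 = f := by omega
      rw [h1, h2, h3, h4]
      omega
    · rintro ⟨a, c⟩ -
      simp only [Prod.mk.injEq]
      omega
    · rintro ⟨⟨a, c⟩, ⟨e, f⟩⟩ h
      simp only [coe_product, Set.mem_prod, mem_coe, mem_disjointPairsBelow] at h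
      simp only [Prod.mk.injEq]
      omega

theorem card_disjointPairsBelow_fst_pos (m : ℕ) :
    #{p ∈ disjointPairsBelow m | 0 < p.1} = 3 ^ m - 2 ^ m := by
  have hzero : {p ∈ disjointPairsBelow m | ¬0 < p.1} = {0} ×ˢ range (2 ^ m) := by
    ext ⟨a, c⟩
    simp only [mem_filter, mem_disjointPairsBelow, mem_product, mem_singleton, mem_range]
    constructor
    · rintro ⟨⟨-, hc, -⟩, ha⟩
      exact ⟨by omega, hc⟩
    · rintro ⟨rfl, hc⟩
      exact ⟨⟨Nat.two_pow_pos m, hc, Nat.zero_and c⟩, by omega⟩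
  have := card_filter_add_card_filter_not (s := disjointPairsBelow m) (p := fun p => 0 < p.1)
  rw [hzero, card_product, card_singleton, card_range, card_disjointPairsBelow] at this
  omega

theorem nimZeroPositions_eq_image (m : ℕ) :
    {p : ℕ × ℕ | 0 < p.1 ∧ p.1 < p.2 ∧ p.1 &&& p.2 = 0 ∧ 2 ^ m ≤ p.2 ∧ p.2 < 2 ^ (m + 1)} =
      ↑({p ∈ disjointPairsBelow m | 0 < p.1}.image fun p => (p.1, 2 ^ m + p.2)) := by
  ext ⟨a, b⟩
  simp only [Set.mem_ofPred_eq, coe_image, Set.mem_image, coe_filter, mem_disjointPairsBelow,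
    Prod.exists, Prod.mk.injEq, pow_succ]
  constructor
  · rintro ⟨ha, hab, hand, hb, hb'⟩
    obtain ⟨c, rfl⟩ : ∃ c, b = 2 ^ m + c := ⟨b - 2 ^ m, by omega⟩
    have hc : c < 2 ^ m := by omega
    have ha' : a < 2 ^ m := by
      by_contra! h
      obtain ⟨a', rfl⟩ : ∃ a', a = 2 ^ m + a' := ⟨a - 2 ^ m, by omega⟩
      exact Nat.two_pow_add_and_two_pow_add_ne_zero (by omega) hc hand
    exact ⟨a, c, ⟨⟨ha', hc, (Nat.and_two_pow_add_eq_zero_iff ha' hc).1 hand⟩, ha⟩, rfl, rfl⟩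
  · rintro ⟨a, c, ⟨⟨ha, hc, hand⟩, hpos⟩, rfl, rfl⟩
    exact ⟨hpos, by omega, (Nat.and_two_pow_add_eq_zero_iff ha hc).2 hand, by omega, by omega⟩

theorem count_a_b_a_add_b_positions (k : ℕ) (hk : 1 ≤ k) :
    {p : ℕ × ℕ | 0 < p.1 ∧ p.1 < p.2 ∧ p.1 &&& p.2 = 0 ∧
      2 ^ (k - 1) ≤ p.2 ∧ p.2 < 2 ^ k}.ncard = 3 ^ (k - 1) - 2 ^ (k - 1) := by
  obtain ⟨m, rfl⟩ : ∃ m, k = m + 1 := ⟨k - 1, by omega⟩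
  have hinj : Function.Injective fun p : ℕ × ℕ => (p.1, 2 ^ m + p.2) := by
    rintro ⟨a, c⟩ ⟨a', c'⟩ h
    simp only [Prod.mk.injEq] at h ⊢
    omega
  rw [Nat.add_sub_cancel, nimZeroPositions_eq_image, Set.ncard_coe_finset,
    card_image_of_injective _ hinj, card_disjointPairsBelow_fst_pos]
end

section
/- For every natural number k, twice the number of positions of the form (a, b, a + b) with nim-sum zero, 0 < a < b, in which all piles have k or fewer binary digits, equals 3^k + 1 − 2^(k+1). Formally: 2 * |{(a, b) : 0 < a ∧ a < b ∧ a AND b = 0 ∧ a + b < 2^k}| = 3^k + 1 − 2^(k+1). (Equivalently, the count equals 3^k/2 − 2^k + 1/2.) -/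
/-!
A carry-free pair of numbers below `2 ^ k` chooses one of `(0, 0)`, `(1, 0)`, `(0, 1)` at each
bit, so there are `3 ^ k` of them. Swapping the coordinates is an involution on these pairs whose
only fixed point is `(0, 0)`, hence `2 * #{a < b} = 3 ^ k - 1`; the pairs with `a = 0 < b` are the
`2 ^ k - 1` pairs `(0, b)`.
-/

open Finset

theorem Nat.and_eq_zero_iff_div_two {a b : ℕ} :
    a &&& b = 0 ↔ a / 2 &&& b / 2 = 0 ∧ (a % 2 = 0 ∨ b % 2 = 0) := by
  rw [← Nat.and_div_two]
  have := Nat.and_mod_two_eq_one (a := a) (b := b)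
  omega

theorem Finset.two_mul_card_filter_lt_add_card_filter_eq {α : Type*} [LinearOrder α]
    {s : Finset (α × α)} (hs : ∀ p ∈ s, p.swap ∈ s) :
    2 * #(s.filter fun p => p.1 < p.2) + #(s.filter fun p => p.1 = p.2) = #s := by
  have hswap : #(s.filter fun p => p.2 < p.1) = #(s.filter fun p => p.1 < p.2) :=
    card_nbij' Prod.swap Prod.swap (fun p hp => by simp_all) (fun p hp => by simp_all)
      (fun p _ => p.swap_swap) (fun p _ => p.swap_swap)
  have hsplit : #s = #(s.filter fun p => p.1 < p.2) + #(s.filter fun p => p.2 < p.1) +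
      #(s.filter fun p => p.1 = p.2) := by
    rw [card_filter, card_filter, card_filter, card_eq_sum_ones, ← sum_add_distrib,
      ← sum_add_distrib]
    refine sum_congr rfl fun p _ => ?_
    rcases lt_trichotomy p.1 p.2 with h | h | h
    · simp [h, h.not_gt, h.ne]
    · simp [h]
    · simp [h, h.not_gt, h.ne']
  omega

def carryFreePairs (k : ℕ) : Finset (ℕ × ℕ) :=
  (range (2 ^ k) ×ˢ range (2 ^ k)).filter fun p => p.1 &&& p.2 = 0 ∧ p.1 + p.2 < 2 ^ k

@[simp]
theorem mem_carryFreePairs {k : ℕ} {p : ℕ × ℕ} :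
    p ∈ carryFreePairs k ↔ p.1 &&& p.2 = 0 ∧ p.1 + p.2 < 2 ^ k := by
  simp only [carryFreePairs, mem_filter, mem_product, mem_range]
  omega

theorem swap_mem_carryFreePairs {k : ℕ} {p : ℕ × ℕ} (hp : p ∈ carryFreePairs k) :
    p.swap ∈ carryFreePairs k := by
  rw [mem_carryFreePairs] at hp ⊢
  rw [Prod.fst_swap, Prod.snd_swap, Nat.and_comm, Nat.add_comm]
  exact hp

theorem card_carryFreePairs (k : ℕ) : #(carryFreePairs k) = 3 ^ k := by
  induction k with
  | zero => rfl
  | succ k ih =>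
    have hlow : #(carryFreePairs (k + 1)) = #(carryFreePairs k ×ˢ range 3) := by
      refine card_nbij' (fun p => ((p.1 / 2, p.2 / 2), p.1 % 2 + 2 * (p.2 % 2)))
        (fun q => (2 * q.1.1 + q.2 % 2, 2 * q.1.2 + q.2 / 2)) ?_ ?_ ?_ ?_
      · rintro ⟨a, b⟩ hab
        simp only [coe_product, Set.mem_prod, mem_coe, mem_carryFreePairs, mem_range,
          Nat.and_eq_zero_iff_div_two (a := a), pow_succ] at hab ⊢
        omega
      · rintro ⟨⟨a, b⟩, c⟩ habc
        simp only [coe_product, Set.mem_prod, mem_coe, mem_carryFreePairs, mem_range,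
          Nat.and_eq_zero_iff_div_two (a := 2 * a + c % 2), pow_succ] at habc ⊢
        have ha : (2 * a + c % 2) / 2 = a := by omega
        have hb : (2 * b + c / 2) / 2 = b := by omega
        rw [ha, hb]
        omega
      · rintro ⟨a, b⟩ hab
        simp only [mem_coe, mem_carryFreePairs, Nat.and_eq_zero_iff_div_two (a := a)] at hab
        simp only [Prod.ext_iff]
        omega
      · rintro ⟨⟨a, b⟩, c⟩ habc
        simp only [coe_product, Set.mem_prod, mem_coe, mem_range] at habc
        simp only [Prod.ext_iff]
        omega
    rw [hlow, card_product, ih, card_range, pow_succ]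

theorem filter_carryFreePairs_fst_eq_snd (k : ℕ) :
    (carryFreePairs k).filter (fun p => p.1 = p.2) = {(0, 0)} := by
  ext ⟨a, b⟩
  simp only [mem_filter, mem_carryFreePairs, mem_singleton, Prod.mk.injEq]
  constructor
  · rintro ⟨⟨hab, -⟩, rfl⟩
    rw [Nat.and_self] at hab
    exact ⟨hab, hab⟩
  · rintro ⟨rfl, rfl⟩
    exact ⟨⟨rfl, Nat.two_pow_pos k⟩, rfl⟩

theorem card_filter_fst_eq_zero_filter_lt_carryFreePairs (k : ℕ) :
    #(((carryFreePairs k).filter fun p => p.1 < p.2).filter fun p => p.1 = 0) = 2 ^ k - 1 := by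
  rw [show 2 ^ k - 1 = #(Ioo 0 (2 ^ k)) by simp]
  refine card_nbij' Prod.snd (fun b => (0, b)) ?_ ?_ ?_ ?_
  · rintro ⟨a, b⟩ hab
    simp only [coe_filter, mem_filter, mem_carryFreePairs, Set.mem_ofPred_eq, coe_Ioo,
      Set.mem_Ioo] at hab ⊢
    omega
  · intro b hb
    simp only [coe_filter, mem_filter, mem_carryFreePairs, Set.mem_ofPred_eq, coe_Ioo,
      Set.mem_Ioo, Nat.zero_and, Nat.zero_add, true_and, and_true] at hb ⊢
    exact hb.symm
  · rintro ⟨a, b⟩ hab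
    simp only [coe_filter, Set.mem_ofPred_eq] at hab
    simp [hab.2]
  · intro b _
    rfl

theorem two_mul_count_positions_le (k : ℕ) :
    2 * {p : ℕ × ℕ | 0 < p.1 ∧ p.1 < p.2 ∧ p.1 &&& p.2 = 0 ∧
      p.1 + p.2 < 2 ^ k}.ncard = 3 ^ k + 1 - 2 ^ (k + 1) := by
  have hsymm := two_mul_card_filter_lt_add_card_filter_eq
    fun _ => swap_mem_carryFreePairs (k := k)
  rw [filter_carryFreePairs_fst_eq_snd, card_singleton, card_carryFreePairs] at hsymm
  have hsplit := card_filter_add_card_filter_not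
    (s := (carryFreePairs k).filter fun p => p.1 < p.2) (fun p : ℕ × ℕ => 0 < p.1)
  simp only [not_lt, Nat.le_zero] at hsplit
  rw [card_filter_fst_eq_zero_filter_lt_carryFreePairs] at hsplit
  have hset : {p : ℕ × ℕ | 0 < p.1 ∧ p.1 < p.2 ∧ p.1 &&& p.2 = 0 ∧ p.1 + p.2 < 2 ^ k} =
      ↑(((carryFreePairs k).filter fun p => p.1 < p.2).filter fun p => 0 < p.1) := by
    ext p
    simp only [Set.mem_ofPred_eq, coe_filter, mem_filter, mem_carryFreePairs]
    tauto
  rw [hset, Set.ncard_coe_finset, pow_succ]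
  have := Nat.two_pow_pos k
  omega
end
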